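/- arXiv:2007.14285 — 2 statements merged into one kernel-verified Lean document; each statement's English description precedes it below -/
import Mathlib

section
/- Let N ∈ ℕ and let t_i = -1 + (i-2)/N for i = 1,…,2N+3 (a uniform mesh on [-1-1/N, 1+1/N]). Define δ_i(u) = N(σ(u - t_{i-1}) - 2σ(u - t_i) + σ(u - t_{i+1})) for i = 2,…,2N+2, where σ(u) = max{u,0}, and L_t(f)(u) = ∑_{i=2}^{2N+2} f(t_i) δ_i(u). Then for every continuous function g on [-1,1], ‖L_t(g)‖_{C[-1,1]} ≤ ‖g‖_{C[-1,1]}. -/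
/-- The ReLU function. -/
def relu (u : ℝ) : ℝ := max u 0

/-- The uniform mesh points `t_i = -1 + (i-2)/N`. -/
noncomputable def meshT (N i : ℕ) : ℝ := -1 + ((i : ℝ) - 2) / N

/-- The hat functions `δ_i(u) = N(σ(u-t_{i-1}) - 2σ(u-t_i) + σ(u-t_{i+1}))`. -/
noncomputable def hatDelta (N i : ℕ) (u : ℝ) : ℝ :=
  N * (relu (u - meshT N (i - 1)) - 2 * relu (u - meshT N i) + relu (u - meshT N (i + 1)))

/-- The quasi-interpolation operator `L_t(f)(u) = ∑_{i=2}^{2N+2} f(t_i) δ_i(u)`. -/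
noncomputable def Lt (N : ℕ) (f : ℝ → ℝ) (u : ℝ) : ℝ :=
  ∑ i ∈ Finset.Icc 2 (2 * N + 2), f (meshT N i) * hatDelta N i u

/-!
`δᵢ(u)` is `N` times the second difference of `t ↦ σ(u - t)` over the mesh, so it is nonnegative
(σ is convex) and the sum of the `δᵢ` telescopes to the difference of the two end slopes
`N (σ(u - tᵢ₊₁) - σ(u - tᵢ))`. For `u ∈ [-1, 1]` these are `0` at the right end and `-1` at the
left end, so the `δᵢ` form a partition of unity there and `L_t(g)(u)` is a convex combination of
values of `g` at mesh points in `[-1, 1]`.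
-/

open Finset

lemma le_relu (x : ℝ) : x ≤ relu x := le_max_left _ _

lemma relu_nonneg (x : ℝ) : 0 ≤ relu x := le_max_right _ _

lemma two_mul_relu_le (a h : ℝ) : 2 * relu a ≤ relu (a + h) + relu (a - h) := by
  have : relu a ≤ (relu (a + h) + relu (a - h)) / 2 :=
    max_le (by linarith [le_relu (a + h), le_relu (a - h)])
      (by linarith [relu_nonneg (a + h), relu_nonneg (a - h)])
  linarith

lemma relu_of_nonneg {x : ℝ} (hx : 0 ≤ x) : relu x = x := max_eq_left hx

lemma relu_of_nonpos {x : ℝ} (hx : x ≤ 0) : relu x = 0 := max_eq_right hx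

lemma meshT_succ (N i : ℕ) : meshT N (i + 1) = meshT N i + 1 / N := by
  simp only [meshT]; push_cast; ring

lemma meshT_two (N : ℕ) : meshT N 2 = -1 := by
  simp [meshT]

lemma meshT_two_mul_add_two {N : ℕ} (hN : N ≠ 0) : meshT N (2 * N + 2) = 1 := by
  simp only [meshT]; push_cast; field_simp; ring

lemma meshT_mem_Icc {N i : ℕ} (h₂ : 2 ≤ i) (h : i ≤ 2 * N + 2) :
    meshT N i ∈ Set.Icc (-1 : ℝ) 1 := by
  have h₂' : (2 : ℝ) ≤ i := by exact_mod_cast h₂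
  have h' : (i : ℝ) ≤ 2 * N + 2 := by exact_mod_cast h
  have hlo : 0 ≤ ((i : ℝ) - 2) / N := div_nonneg (by linarith) N.cast_nonneg
  have hhi : ((i : ℝ) - 2) / N ≤ 2 := div_le_of_le_mul₀ N.cast_nonneg zero_le_two (by linarith)
  exact ⟨by simp only [meshT]; linarith, by simp only [meshT]; linarith⟩

lemma hatDelta_succ (N i : ℕ) (u : ℝ) :
    hatDelta N (i + 1) u =
      N * (relu (u - meshT N i) - 2 * relu (u - meshT N (i + 1)) + relu (u - meshT N (i + 2))) := by
  simp [hatDelta]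

lemma hatDelta_nonneg (N : ℕ) {i : ℕ} (hi : 1 ≤ i) (u : ℝ) : 0 ≤ hatDelta N i u := by
  obtain ⟨j, rfl⟩ : ∃ j, i = j + 1 := ⟨i - 1, by omega⟩
  have hprev : u - meshT N j = u - meshT N (j + 1) + 1 / N := by rw [meshT_succ]; ring
  have hnext : u - meshT N (j + 2) = u - meshT N (j + 1) - 1 / N := by rw [meshT_succ N (j + 1)]; ring
  rw [hatDelta_succ, hprev, hnext]
  exact mul_nonneg N.cast_nonneg (by linarith [two_mul_relu_le (u - meshT N (j + 1)) (1 / N)])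

noncomputable def rampSlope (N i : ℕ) (u : ℝ) : ℝ :=
  N * (relu (u - meshT N (i + 1)) - relu (u - meshT N i))

lemma hatDelta_succ_eq_rampSlope_sub (N i : ℕ) (u : ℝ) :
    hatDelta N (i + 1) u = rampSlope N (i + 1) u - rampSlope N i u := by
  rw [hatDelta_succ, rampSlope, rampSlope]; ring

lemma sum_hatDelta_eq_one {N : ℕ} (hN : 1 ≤ N) {u : ℝ} (hu : u ∈ Set.Icc (-1 : ℝ) 1) :
    ∑ i ∈ Icc 2 (2 * N + 2), hatDelta N i u = 1 := by
  obtain ⟨hu₁, hu₂⟩ := hu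
  have hN₀ : (N : ℝ) ≠ 0 := by positivity
  have hinv : (0 : ℝ) < 1 / N := by positivity
  have hlast : rampSlope N (2 * N + 2) u = 0 := by
    rw [rampSlope, meshT_succ, meshT_two_mul_add_two (by omega),
      relu_of_nonpos (by linarith), relu_of_nonpos (by linarith)]
    ring
  have hfirst : rampSlope N 1 u = -1 := by
    rw [rampSlope, meshT_two, (by simp only [meshT]; push_cast; ring : meshT N 1 = -1 - 1 / N),
      relu_of_nonneg (by linarith), relu_of_nonneg (by linarith)]
    field_simp
    ring
  calc ∑ i ∈ Icc 2 (2 * N + 2), hatDelta N i u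
      = ∑ i ∈ Ico 1 (2 * N + 2), hatDelta N (i + 1) u := by
        rw [sum_Ico_add' (fun i => hatDelta N i u)]; rfl
    _ = ∑ i ∈ Ico 1 (2 * N + 2), (rampSlope N (i + 1) u - rampSlope N i u) := by
        simp only [hatDelta_succ_eq_rampSlope_sub]
    _ = 1 := by
        rw [sum_Ico_sub (fun i => rampSlope N i u) (by omega), hlast, hfirst]; ring

lemma abs_sum_mul_le_of_sum_eq_one {ι : Type*} {s : Finset ι} {f w : ι → ℝ} {M : ℝ}
    (hw : ∀ i ∈ s, 0 ≤ w i) (hsum : ∑ i ∈ s, w i = 1) (hf : ∀ i ∈ s, |f i| ≤ M) :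
    |∑ i ∈ s, f i * w i| ≤ M := by
  have := (convex_Icc (-M) M).sum_mem hw hsum fun i hi => abs_le.mp (hf i hi)
  simp only [smul_eq_mul, mul_comm (w _)] at this
  exact abs_le.mpr this

theorem Lt_norm_le (N : ℕ) (hN : 1 ≤ N) (g : ℝ → ℝ)
    (hg : ContinuousOn g (Set.Icc (-1 : ℝ) 1)) :
    ∀ u ∈ Set.Icc (-1 : ℝ) 1,
      |Lt N g u| ≤ sSup ((fun v => |g v|) '' Set.Icc (-1 : ℝ) 1) := by
  intro u hu
  have hbdd : BddAbove ((fun v => |g v|) '' Set.Icc (-1 : ℝ) 1) :=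
    isCompact_Icc.bddAbove_image hg.abs
  refine abs_sum_mul_le_of_sum_eq_one (fun i hi => hatDelta_nonneg N ?_ u)
    (sum_hatDelta_eq_one hN hu) fun i hi => le_csSup hbdd ⟨_, meshT_mem_Icc ?_ ?_, rfl⟩
  all_goals simp only [Finset.mem_Icc] at hi; omega
end

section
/- Let 0 < α ≤ 1 and g : [-1,1] → ℝ with |g|_{W^α_∞} = sup_{u≠v}|g(u)-g(v)|/|u-v|^α < ∞. Then for every N ∈ ℕ there exist coefficients c₁,…,c_{2N+3} ∈ ℝ and knots t₁ < … < t_{2N+3} in [-1-1/N, 1+1/N] such that sup_{u∈[-1,1]} |g(u) - ∑_{i=1}^{2N+3} c_i σ(u - t_i)| ≤ 2 |g|_{W^α_∞} N^{-α}, where σ(u) = max{u, 0}. -/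
lemma abel_sum (M : ℕ) (s r : ℕ → ℝ) :
    ∑ i ∈ Finset.range (M+1), (s i - if i = 0 then 0 else s (i-1)) * r i
      = (∑ i ∈ Finset.range M, s i * (r i - r (i+1))) + s M * r M := by
  induction M with
  | zero => simp
  | succ M ih =>
      rw [Finset.sum_range_succ, ih, Finset.sum_range_succ]
      simp only [Nat.succ_ne_zero, if_false, Nat.add_sub_cancel]
      ring

set_option maxHeartbeats 1000000 in
theorem shallow_relu_approx (N : ℕ) (hN : 1 ≤ N) (α : ℝ) (hα0 : 0 < α) (hα1 : α ≤ 1)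
    (g : ℝ → ℝ) (L : ℝ) (hL : 0 ≤ L)
    (hHolder : ∀ u ∈ Set.Icc (-1 : ℝ) 1, ∀ v ∈ Set.Icc (-1 : ℝ) 1,
      |g u - g v| ≤ L * |u - v| ^ α) :
    ∃ (c : Fin (2 * N + 3) → ℝ) (t : Fin (2 * N + 3) → ℝ),
      StrictMono t ∧
      (∀ i, t i ∈ Set.Icc (-1 - 1 / (N : ℝ)) (1 + 1 / (N : ℝ))) ∧
      ∀ u ∈ Set.Icc (-1 : ℝ) 1,
        |g u - ∑ i, c i * relu (u - t i)| ≤ 2 * L * (N : ℝ) ^ (-α) := by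
  have hN0 : (0:ℝ) < N := by exact_mod_cast hN
  have hN1 : (1:ℝ) ≤ N := by exact_mod_cast hN
  set h : ℝ := 1 / N with hh_def
  have hh : 0 < h := by positivity
  have hNh : (N:ℝ) * h = 1 := by rw [hh_def]; field_simp
  set T : ℕ → ℝ := fun i => -1 - h + i * h with hT_def
  have hTmono : ∀ a b : ℕ, a ≤ b → T a ≤ T b := by
    intro a b hab
    have hab' : (a:ℝ) ≤ b := by exact_mod_cast hab
    simp only [hT_def]
    nlinarith
  have hTsucc : ∀ i : ℕ, T (i+1) = T i + h := by
    intro i; simp only [hT_def]; push_cast; ring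
  set s : ℕ → ℝ := fun i => if i = 0 then (N:ℝ) * g (-1)
    else if i ≤ 2*N then (N:ℝ) * (g (T (i+1)) - g (T i)) else 0 with hs_def
  refine ⟨fun i => s i - (if (i:ℕ) = 0 then 0 else s ((i:ℕ)-1)), fun i => T i, ?_, ?_, ?_⟩
  · intro i j hij
    have hij' : ((i:ℕ):ℝ) < ((j:ℕ):ℝ) := by exact_mod_cast hij
    simp only [hT_def]
    nlinarith
  · intro i
    have hi : ((i:ℕ):ℝ) ≤ 2*N+2 := by
      have := i.isLt
      have : (i:ℕ) ≤ 2*N+2 := by omega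
      exact_mod_cast this
    have hi0 : (0:ℝ) ≤ ((i:ℕ):ℝ) := by positivity
    constructor
    · simp only [hT_def]; nlinarith
    · simp only [hT_def]; nlinarith
  · intro u hu
    obtain ⟨hu1, hu2⟩ := hu
    set k : ℕ := Nat.floor ((u+1) * N) with hk_def
    set j : ℕ := min (2*N) (k+1) with hj_def
    have hj1 : 1 ≤ j := le_min (by omega) (by omega)
    have hj2N : j ≤ 2*N := min_le_left _ _
    have hjk : j ≤ k + 1 := min_le_right _ _
    have hfloor : (k:ℝ) ≤ (u+1) * N := Nat.floor_le (by nlinarith)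
    have hjr : (j:ℝ) ≤ (u+1)*N + 1 := by
      have h1 : (j:ℝ) ≤ (k:ℝ) + 1 := by exact_mod_cast hjk
      linarith
    have hTj_le : T j ≤ u := by
      simp only [hT_def]
      nlinarith [mul_le_mul_of_nonneg_right hjr hh.le]
    have hle_Tj1 : u ≤ T (j+1) := by
      have hjr2 : (u+1)*N ≤ (j:ℝ) := by
        rcases le_or_gt (k+1) (2*N) with hc | hc
        · have hjek : j = k + 1 := min_eq_right hc
          have hlt := Nat.lt_floor_add_one ((u+1)*N)
          rw [hjek]; push_cast
          rw [← hk_def] at hlt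
          push_cast at hlt
          linarith
        · have hjek : j = 2*N := min_eq_left (by omega)
          rw [hjek]; push_cast; nlinarith
      simp only [hT_def]; push_cast
      nlinarith [mul_le_mul_of_nonneg_right hjr2 hh.le]
    -- sum evaluation
    have hrelu_pos : ∀ x : ℝ, 0 ≤ x → relu x = x := fun x hx => max_eq_left hx
    have hrelu_neg : ∀ x : ℝ, x ≤ 0 → relu x = 0 := fun x hx => max_eq_right hx
    have hsum : (∑ i : Fin (2*N+3), (s i - (if (i:ℕ) = 0 then 0 else s ((i:ℕ)-1))) * relu (u - T i))
        = g (T j) + s j * (u - T j) := by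
      rw [Fin.sum_univ_eq_sum_range (fun i => (s i - (if i = 0 then 0 else s (i-1))) * relu (u - T i)) (2*N+3)]
      have habel := abel_sum (2*N+2) s (fun i => relu (u - T i))
      have h23 : 2*N+3 = (2*N+2)+1 := rfl
      rw [h23, habel]
      have hsM : s (2*N+2) = 0 := by
        simp only [hs_def]
        rw [if_neg (by omega), if_neg (by omega)]
      rw [hsM, zero_mul, add_zero]
      have hsub : Finset.range (j+1) ⊆ Finset.range (2*N+2) := Finset.range_subset_range.mpr (by omega)
      rw [← Finset.sum_subset hsub ?hz]
      case hz =>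
        intro i hi hni
        simp only [Finset.mem_range] at hi hni
        have hji : j + 1 ≤ i := by omega
        have h1 : relu (u - T i) = 0 := hrelu_neg _ (by
          have := hTmono (j+1) i hji
          linarith)
        have h2 : relu (u - T (i+1)) = 0 := hrelu_neg _ (by
          have := hTmono (j+1) (i+1) (by omega)
          linarith)
        simp [h1, h2]
      rw [Finset.sum_range_succ]
      have hrj : relu (u - T j) = u - T j := hrelu_pos _ (by linarith)
      have hrj1 : relu (u - T (j+1)) = 0 := hrelu_neg _ (by linarith)
      rw [hrj, hrj1, sub_zero]
      have hcong : ∀ i ∈ Finset.range j,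
          s i * (relu (u - T i) - relu (u - T (i+1))) = s i * h := by
        intro i hi
        simp only [Finset.mem_range] at hi
        have h1 : relu (u - T i) = u - T i := hrelu_pos _ (by
          have := hTmono i j (by omega); linarith)
        have h2 : relu (u - T (i+1)) = u - T (i+1) := hrelu_pos _ (by
          have := hTmono (i+1) j (by omega); linarith)
        rw [h1, h2, hTsucc i]
        ring
      rw [Finset.sum_congr rfl hcong]
      have htel : ∀ m, 1 ≤ m → m ≤ 2*N+1 → ∑ i ∈ Finset.range m, s i * h = g (T m) := by
        intro m
        induction m with
        | zero => omega
        | succ m ih =>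
          intro _ h2
          rcases Nat.eq_zero_or_pos m with hm0 | hm1
          · subst hm0
            rw [Finset.sum_range_one]
            have hs0 : s 0 = (N:ℝ) * g (-1) := by simp [hs_def]
            have hT1 : T 1 = -1 := by simp only [hT_def]; push_cast; ring
            rw [hs0, hT1]
            linear_combination g (-1) * hNh
          · rw [Finset.sum_range_succ, ih hm1 (by omega)]
            have hsm : s m = (N:ℝ) * (g (T (m+1)) - g (T m)) := by
              simp only [hs_def]
              rw [if_neg (by omega), if_pos (by omega)]
            rw [hsm]
            linear_combination (g (T (m+1)) - g (T m)) * hNh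
      rw [htel j hj1 (by omega)]
    beta_reduce
    rw [hsum]
    -- final estimate
    have ha_mem : T j ∈ Set.Icc (-1:ℝ) 1 := by
      have hj1' : (1:ℝ) ≤ (j:ℝ) := by exact_mod_cast hj1
      have hj2' : (j:ℝ) ≤ 2*N := by exact_mod_cast hj2N
      constructor
      · simp only [hT_def]; nlinarith
      · simp only [hT_def]; nlinarith
    have hb_mem : T (j+1) ∈ Set.Icc (-1:ℝ) 1 := by
      have hj1' : (1:ℝ) ≤ (j:ℝ) := by exact_mod_cast hj1
      have hj2' : (j:ℝ) ≤ 2*N := by exact_mod_cast hj2N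
      constructor
      · simp only [hT_def]; push_cast; nlinarith
      · simp only [hT_def]; push_cast; nlinarith
    have hba : T (j+1) = T j + h := hTsucc j
    set lam : ℝ := (u - T j) * N with hlam_def
    have hlam0 : 0 ≤ lam := by nlinarith
    have hlam1 : lam ≤ 1 := by nlinarith [hle_Tj1, hba, hNh]
    have hsj : s j = (N:ℝ) * (g (T (j+1)) - g (T j)) := by
      simp only [hs_def]
      rw [if_neg (by omega), if_pos (by omega)]
    have key : g u - (g (T j) + s j * (u - T j))
        = (1 - lam) * (g u - g (T j)) + lam * (g u - g (T (j+1))) := by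
      rw [hsj]; simp only [hlam_def]; ring
    have hrpow : h ^ α = (N:ℝ) ^ (-α) := by
      rw [hh_def, one_div, Real.inv_rpow hN0.le, ← Real.rpow_neg hN0.le]
    have hga : |g u - g (T j)| ≤ L * h ^ α := by
      refine le_trans (hHolder u ⟨hu1, hu2⟩ (T j) ha_mem) ?_
      have h1 : |u - T j| ≤ h := by
        rw [abs_of_nonneg (by linarith)]
        linarith [hle_Tj1, hba]
      exact mul_le_mul_of_nonneg_left (Real.rpow_le_rpow (abs_nonneg _) h1 hα0.le) hL
    have hgb : |g u - g (T (j+1))| ≤ L * h ^ α := by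
      refine le_trans (hHolder u ⟨hu1, hu2⟩ (T (j+1)) hb_mem) ?_
      have h1 : |u - T (j+1)| ≤ h := by
        rw [abs_of_nonpos (by linarith)]
        have := hTj_le
        linarith [hba]
      exact mul_le_mul_of_nonneg_left (Real.rpow_le_rpow (abs_nonneg _) h1 hα0.le) hL
    have hLh : 0 ≤ L * h ^ α := by positivity
    calc |g u - (g (T j) + s j * (u - T j))|
        = |(1 - lam) * (g u - g (T j)) + lam * (g u - g (T (j+1)))| := by rw [key]
      _ ≤ (1 - lam) * |g u - g (T j)| + lam * |g u - g (T (j+1))| := by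
          refine le_trans (abs_add_le _ _) ?_
          rw [abs_mul, abs_mul, abs_of_nonneg (by linarith : (0:ℝ) ≤ 1 - lam), abs_of_nonneg hlam0]
      _ ≤ (1 - lam) * (L * h ^ α) + lam * (L * h ^ α) := by
          exact add_le_add (mul_le_mul_of_nonneg_left hga (by linarith))
            (mul_le_mul_of_nonneg_left hgb hlam0)
      _ = L * h ^ α := by ring
      _ ≤ 2 * L * (N:ℝ) ^ (-α) := by
          rw [hrpow]
          nlinarith [Real.rpow_nonneg hN0.le (-α), mul_nonneg hL (Real.rpow_nonneg hN0.le (-α))]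
end
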